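/- Let Λ be a compact metric space, f : Λ → Λ continuous, and suppose there exists a sequence of periodic points (x_n) in Λ whose periodic measures are dense in M_f(Λ), together with a point x ∈ Λ shadowing each x_n on the time interval [a_n, b_n] with error 2^{-n+1}δ, where a_n/(b_n − a_n) → 0 and b_n − a_n is a multiple of the period of x_n. Then M_f(Λ) ⊆ V_f(x), i.e., every f-invariant Borel probability measure on Λ is a weak* accumulation point of the empirical measures of x. -/

import Mathlib

/-!
Invariant measures form a convex set, so an invariant measure `μ` is either the only one or an
accumulation point of `M_f(Λ)`; either way, density makes `μ` the limit of a subsequence of the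
periodic measures of the `x_n`. Along it, the empirical average of `x` up to time `b_n` differs
from the periodic average of `x_n` by the contribution of the first `a_n` steps, which is
`O(a_n / (b_n - a_n))`, plus the shadowing error on `[a_n, b_n)`, a whole number of periods of
`x_n`; both vanish against a uniformly continuous test function.
-/
open MeasureTheory Filter Topology
open scoped ENNReal NNReal

variable {Λ : Type*}

/-- Empirical measure `(1/(N+1)) ∑_{j=0}^{N} δ_{f^j y}` (this indexing realizes the
sequence `μ_N` for `N ≥ 1`). -/
noncomputable def empP [MetricSpace Λ] [MeasurableSpace Λ] [BorelSpace Λ]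
    (f : Λ → Λ) (y : Λ) (N : ℕ) : ProbabilityMeasure Λ :=
  ⟨((N + 1 : ℕ) : ℝ≥0∞)⁻¹ • ∑ j ∈ Finset.range (N + 1), Measure.dirac (f^[j] y), by
    constructor
    simp [Measure.smul_apply, ENNReal.inv_mul_cancel]⟩

/-- `V_f(y)`: the set of weak* accumulation points of the empirical measures of `y`. -/
def accPts [MetricSpace Λ] [MeasurableSpace Λ] [BorelSpace Λ] (f : Λ → Λ) (y : Λ) :
    Set (ProbabilityMeasure Λ) :=
  {μ | MapClusterPt μ atTop (empP f y)}

/-- `M_f(Λ)`: the set of `f`-invariant Borel probability measures. -/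
def invProb [MetricSpace Λ] [MeasurableSpace Λ] [BorelSpace Λ] (f : Λ → Λ) :
    Set (ProbabilityMeasure Λ) :=
  {μ | (μ : Measure Λ).map f = μ}

/-- The periodic measure of a periodic point `x` of period `k ≥ 1`. -/
noncomputable def perP [MetricSpace Λ] [MeasurableSpace Λ] [BorelSpace Λ]
    (f : Λ → Λ) (x : Λ) (k : ℕ) (hk : 0 < k) : ProbabilityMeasure Λ :=
  ⟨((k : ℕ) : ℝ≥0∞)⁻¹ • ∑ i ∈ Finset.range k, Measure.dirac (f^[i] x), by
    constructor
    simp [Measure.smul_apply, ENNReal.inv_mul_cancel, hk.ne']⟩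

open BoundedContinuousFunction unitInterval

theorem mapClusterPt_atTop_of_accPt_range {X : Type*} [TopologicalSpace X] [T1Space X]
    {u : ℕ → X} {x : X} (h : AccPt x (𝓟 (Set.range u))) : MapClusterPt x atTop u := by
  rw [mapClusterPt_iff_frequently]
  intro s hs
  rw [Nat.frequently_atTop_iff_infinite]
  intro hfin
  refine Set.Infinite.of_accPt (h.nhds_inter hs : AccPt x (𝓟 (s ∩ Set.range u)))
    ((hfin.image u).subset ?_)
  rintro _ ⟨hy, n, rfl⟩
  exact ⟨n, hy, rfl⟩

namespace MeasureTheory.ProbabilityMeasure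

variable {Ω : Type*} [MeasurableSpace Ω]

noncomputable def mix (μ ν : ProbabilityMeasure Ω) (t : I) : ProbabilityMeasure Ω :=
  ⟨toNNReal (σ t) • (μ : Measure Ω) + toNNReal t • (ν : Measure Ω), by
    constructor
    simp only [Measure.coe_add, Measure.coe_smul, Pi.add_apply, Pi.smul_apply, measure_univ,
      ENNReal.smul_def, smul_eq_mul, mul_one, ← ENNReal.coe_add, ENNReal.coe_eq_one]
    exact NNReal.eq (sub_add_cancel _ _)⟩

theorem toMeasure_mix (μ ν : ProbabilityMeasure Ω) (t : I) :
    (mix μ ν t : Measure Ω) = toNNReal (σ t) • (μ : Measure Ω) + toNNReal t • (ν : Measure Ω) :=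
  rfl

@[simp]
theorem mix_zero (μ ν : ProbabilityMeasure Ω) : mix μ ν 0 = μ := by
  ext1
  simp [toMeasure_mix]

theorem integral_mix [TopologicalSpace Ω] [OpensMeasurableSpace Ω] (μ ν : ProbabilityMeasure Ω)
    (t : I) (g : Ω →ᵇ ℝ) :
    ∫ ω, g ω ∂(mix μ ν t : Measure Ω)
      = (1 - (t : ℝ)) * ∫ ω, g ω ∂(μ : Measure Ω) + t * ∫ ω, g ω ∂(ν : Measure Ω) := by
  rw [toMeasure_mix, integral_add_measure ((g.integrable _).smul_measure_nnreal)
    ((g.integrable _).smul_measure_nnreal), integral_smul_nnreal_measure,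
    integral_smul_nnreal_measure]
  rfl

theorem continuous_mix [TopologicalSpace Ω] [OpensMeasurableSpace Ω]
    (μ ν : ProbabilityMeasure Ω) : Continuous (mix μ ν) := by
  refine continuous_iff_continuousAt.2 fun t => ?_
  refine tendsto_iff_forall_integral_tendsto.2 fun g => ?_
  simp only [integral_mix]
  exact ((continuous_const.sub continuous_subtype_val).mul continuous_const).add
    (continuous_subtype_val.mul continuous_const) |>.tendsto t

theorem mix_ne_left [TopologicalSpace Ω] [HasOuterApproxClosed Ω] [BorelSpace Ω]
    {μ ν : ProbabilityMeasure Ω} (hνμ : ν ≠ μ) {t : I} (ht : t ≠ 0) : mix μ ν t ≠ μ := by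
  intro h
  refine hνμ (toMeasure_injective (ext_of_forall_integral_eq_of_IsFiniteMeasure fun g => ?_))
  have hg := integral_mix μ ν t g
  rw [h] at hg
  have ht' : (t : ℝ) ≠ 0 := fun h0 => ht (Subtype.ext h0)
  exact mul_left_cancel₀ ht' (by linarith)

theorem map_mix {Ω' : Type*} [MeasurableSpace Ω'] {f : Ω → Ω'} (hf : Measurable f)
    (μ ν : ProbabilityMeasure Ω) (t : I) :
    (mix μ ν t : Measure Ω).map f
      = toNNReal (σ t) • (μ : Measure Ω).map f + toNNReal t • (ν : Measure Ω).map f := by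
  rw [toMeasure_mix, Measure.map_add _ _ hf, Measure.map_smul, Measure.map_smul]

theorem tendsto_of_forall_integral_sub_tendsto_zero {γ : Type*} [TopologicalSpace Ω]
    [OpensMeasurableSpace Ω]
    {F : Filter γ} {μs νs : γ → ProbabilityMeasure Ω} {μ : ProbabilityMeasure Ω}
    (hμs : Tendsto μs F (𝓝 μ))
    (h : ∀ g : Ω →ᵇ ℝ, Tendsto (fun i => ∫ ω, g ω ∂(νs i : Measure Ω)
      - ∫ ω, g ω ∂(μs i : Measure Ω)) F (𝓝 0)) :
    Tendsto νs F (𝓝 μ) := by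
  rw [tendsto_iff_forall_integral_tendsto] at hμs ⊢
  intro g
  simpa using (h g).add (hμs g)

end MeasureTheory.ProbabilityMeasure

section Periodic

variable {M : Type*} [AddCommMonoid M] {F : ℕ → M} {p : ℕ}

theorem Function.Periodic.sum_range_add (hF : Function.Periodic F p) (c : ℕ) :
    ∑ i ∈ Finset.range p, F (c + i) = ∑ i ∈ Finset.range p, F i := by
  induction c with
  | zero => simp
  | succ c ih =>
    rw [← ih]
    cases p with
    | zero => simp
    | succ q =>
      rw [Finset.sum_range_succ, Finset.sum_range_succ' (fun i => F (c + i)), add_zero,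
        show c + 1 + q = c + (q + 1) by omega, hF c]
      simp only [add_assoc, add_comm 1]

theorem Function.Periodic.sum_Ico_add_mul (hF : Function.Periodic F p) (a m : ℕ) :
    ∑ j ∈ Finset.Ico a (a + m * p), F j = m • ∑ i ∈ Finset.range p, F i := by
  induction m with
  | zero => simp
  | succ m ih =>
    rw [← Finset.sum_Ico_consecutive F (Nat.le_add_right a (m * p))
      (by gcongr; omega), ih, Finset.sum_Ico_eq_sum_range,
      show a + (m + 1) * p - (a + m * p) = p by rw [add_mul, one_mul]; omega,
      hF.sum_range_add, succ_nsmul]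

end Periodic

theorem abs_average_sub_average_Ico_le {u v : ℕ → ℝ} {a b : ℕ} (hab : a < b) {C η : ℝ}
    (hu : ∀ j, |u j| ≤ C) (huv : ∀ j ∈ Finset.Ico a b, |u j - v j| ≤ η) :
    |(b : ℝ)⁻¹ * ∑ j ∈ Finset.range b, u j - ((b : ℝ) - a)⁻¹ * ∑ j ∈ Finset.Ico a b, v j|
      ≤ 2 * C * (a / (b - a)) + η := by
  have hL : (0 : ℝ) < b - a := sub_pos.2 (Nat.cast_lt.2 hab)
  have hLB : (b : ℝ) - a ≤ b := sub_le_self _ (Nat.cast_nonneg a)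
  have hB : (0 : ℝ) < b := hL.trans_le hLB
  have hC : 0 ≤ C := (abs_nonneg _).trans (hu 0)
  have hcard : ((Finset.Ico a b).card : ℝ) = b - a := by
    rw [Nat.card_Ico, Nat.cast_sub hab.le]
  set S₀ := ∑ j ∈ Finset.range a, u j
  set S := ∑ j ∈ Finset.Ico a b, u j
  set T := ∑ j ∈ Finset.Ico a b, v j
  have hS₀ : |S₀| ≤ a * C := by
    refine (Finset.abs_sum_le_sum_abs _ _).trans ?_
    simpa only [Finset.card_range, nsmul_eq_mul] using
      Finset.sum_le_card_nsmul (Finset.range a) _ _ fun j _ => hu j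
  have hS : |S| ≤ (b - a) * C := by
    refine (Finset.abs_sum_le_sum_abs _ _).trans ?_
    simpa only [hcard, nsmul_eq_mul] using
      Finset.sum_le_card_nsmul (Finset.Ico a b) _ _ fun j _ => hu j
  have hST : |S - T| ≤ (b - a) * η := by
    rw [← Finset.sum_sub_distrib]
    refine (Finset.abs_sum_le_sum_abs _ _).trans ?_
    simpa only [hcard, nsmul_eq_mul] using Finset.sum_le_card_nsmul _ _ _ huv
  have hab' : (a : ℝ) / b ≤ a / (b - a) := div_le_div_of_nonneg_left (Nat.cast_nonneg a) hL hLB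
  have hsplit : (b : ℝ)⁻¹ * ∑ j ∈ Finset.range b, u j - ((b : ℝ) - a)⁻¹ * T
      = (b : ℝ)⁻¹ * S₀ - a / b * (((b : ℝ) - a)⁻¹ * S) + ((b : ℝ) - a)⁻¹ * (S - T) := by
    rw [← Finset.sum_range_add_sum_Ico _ hab.le]
    simp only [S₀, S]
    field_simp
    ring
  have h₁ : |(b : ℝ)⁻¹ * S₀| ≤ C * (a / (b - a)) := by
    rw [abs_mul, abs_inv, abs_of_pos hB]
    calc (b : ℝ)⁻¹ * |S₀| ≤ (b : ℝ)⁻¹ * (a * C) := by gcongr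
      _ = C * (a / b) := by ring
      _ ≤ C * (a / (b - a)) := by gcongr
  have h₂ : |a / b * (((b : ℝ) - a)⁻¹ * S)| ≤ C * (a / (b - a)) := by
    rw [abs_mul, abs_mul, abs_inv, abs_of_pos hL, abs_of_nonneg (by positivity)]
    calc a / b * (((b : ℝ) - a)⁻¹ * |S|)
        ≤ a / b * (((b : ℝ) - a)⁻¹ * ((b - a) * C)) := by gcongr
      _ = C * (a / b) := by field_simp
      _ ≤ C * (a / (b - a)) := by gcongr
  have h₃ : |((b : ℝ) - a)⁻¹ * (S - T)| ≤ η := by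
    rw [abs_mul, abs_inv, abs_of_pos hL]
    calc ((b : ℝ) - a)⁻¹ * |S - T| ≤ ((b : ℝ) - a)⁻¹ * ((b - a) * η) := by gcongr
      _ = η := by field_simp
  rw [hsplit]
  linarith [abs_sub ((b : ℝ)⁻¹ * S₀) (a / b * (((b : ℝ) - a)⁻¹ * S)),
    abs_add_le ((b : ℝ)⁻¹ * S₀ - a / b * (((b : ℝ) - a)⁻¹ * S)) (((b : ℝ) - a)⁻¹ * (S - T))]

section Dynamics

variable [MetricSpace Λ] [MeasurableSpace Λ] [BorelSpace Λ] {f : Λ → Λ}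

theorem mix_mem_invProb (hf : Measurable f) {μ ν : ProbabilityMeasure Λ} (hμ : μ ∈ invProb f)
    (hν : ν ∈ invProb f) (t : I) : ProbabilityMeasure.mix μ ν t ∈ invProb f := by
  change Measure.map f _ = _
  rw [ProbabilityMeasure.map_mix hf, hμ, hν, ProbabilityMeasure.toMeasure_mix]

theorem accPt_invProb (hf : Measurable f) {μ ν : ProbabilityMeasure Λ} (hμ : μ ∈ invProb f)
    (hν : ν ∈ invProb f) (hνμ : ν ≠ μ) : AccPt μ (𝓟 (invProb f)) := by
  have hlim : Tendsto (ProbabilityMeasure.mix μ ν) (𝓝[≠] 0) (𝓝 μ) := by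
    simpa using ((ProbabilityMeasure.continuous_mix μ ν).tendsto 0).mono_left nhdsWithin_le_nhds
  rw [accPt_iff_frequently]
  refine hlim.frequently (Eventually.frequently ?_)
  filter_upwards [self_mem_nhdsWithin] with t ht
  exact ⟨ProbabilityMeasure.mix_ne_left hνμ ht, mix_mem_invProb hf hμ hν t⟩

theorem mapClusterPt_of_invProb_subset_closure_range (hf : Measurable f)
    {P : ℕ → ProbabilityMeasure Λ} (hP : ∀ n, P n ∈ invProb f)
    (hdense : invProb f ⊆ closure (Set.range P)) {μ : ProbabilityMeasure Λ}
    (hμ : μ ∈ invProb f) : MapClusterPt μ atTop P := by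
  by_cases hconst : ∀ n, P n = μ
  · exact (tendsto_const_nhds.congr fun n => (hconst n).symm).mapClusterPt
  push Not at hconst
  obtain ⟨m, hm⟩ := hconst
  refine mapClusterPt_atTop_of_accPt_range ?_
  rw [← mem_derivedSet, ← derivedSet_closure]
  exact derivedSet_mono _ _ hdense (accPt_invProb hf hμ (hP m) hm)

theorem integral_smul_sum_dirac {ι : Type*} (g : Λ →ᵇ ℝ) (c : ℝ≥0∞) (s : Finset ι)
    (y : ι → Λ) :
    ∫ z, g z ∂(c • ∑ i ∈ s, Measure.dirac (y i)) = c.toReal * ∑ i ∈ s, g (y i) := by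
  rw [integral_smul_measure, integral_finsetSum_measure fun i _ => g.integrable _]
  simp [integral_dirac, smul_eq_mul]

theorem integral_empP (g : Λ →ᵇ ℝ) (y : Λ) (N : ℕ) :
    ∫ z, g z ∂(empP f y N : Measure Λ)
      = ((N + 1 : ℕ) : ℝ)⁻¹ * ∑ j ∈ Finset.range (N + 1), g (f^[j] y) := by
  change ∫ z, g z ∂(((N + 1 : ℕ) : ℝ≥0∞)⁻¹ • _) = _
  rw [integral_smul_sum_dirac, ENNReal.toReal_inv, ENNReal.toReal_natCast]

theorem integral_perP (g : Λ →ᵇ ℝ) (y : Λ) {k : ℕ} (hk : 0 < k) :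
    ∫ z, g z ∂(perP f y k hk : Measure Λ)
      = (k : ℝ)⁻¹ * ∑ i ∈ Finset.range k, g (f^[i] y) := by
  change ∫ z, g z ∂(((k : ℕ) : ℝ≥0∞)⁻¹ • _) = _
  rw [integral_smul_sum_dirac, ENNReal.toReal_inv, ENNReal.toReal_natCast]

theorem perP_mem_invProb (hf : Measurable f) {y : Λ} {k : ℕ} (hk : 0 < k) (hy : f^[k] y = y) :
    perP f y k hk ∈ invProb f := by
  change Measure.map f (((k : ℕ) : ℝ≥0∞)⁻¹ • ∑ i ∈ Finset.range k, Measure.dirac (f^[i] y)) = _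
  rw [Measure.map_smul, ← Measure.mapₗ_apply_of_measurable hf, map_sum]
  simp only [Measure.mapₗ_apply_of_measurable hf, Measure.map_dirac' hf]
  congr 1
  simpa only [Function.comp_apply, add_comm 1, Function.iterate_succ_apply'] using
    ((Function.IsPeriodicPt.periodic_iterate hy).comp Measure.dirac).sum_range_add 1

theorem integral_perP_eq_average_Ico (g : Λ →ᵇ ℝ) {y : Λ} {k : ℕ} (hk : 0 < k)
    (hy : f^[k] y = y) {a b : ℕ} (hab : a < b) (hdvd : k ∣ b - a) :
    ∫ z, g z ∂(perP f y k hk : Measure Λ)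
      = ((b : ℝ) - a)⁻¹ * ∑ j ∈ Finset.Ico a b, g (f^[j] y) := by
  obtain ⟨m, hm⟩ := hdvd
  have hb : b = a + m * k := by rw [mul_comm]; omega
  have hm0 : (m : ℝ) ≠ 0 := Nat.cast_ne_zero.2 (by rintro rfl; omega)
  have hk0 : (k : ℝ) ≠ 0 := Nat.cast_ne_zero.2 hk.ne'
  have hper : Function.Periodic (fun j => g (f^[j] y)) k :=
    (Function.IsPeriodicPt.periodic_iterate hy).comp g
  rw [integral_perP, hb, hper.sum_Ico_add_mul, nsmul_eq_mul]
  push_cast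
  field_simp
  ring

theorem tendsto_integral_empP_sub_integral_perP [CompactSpace Λ] (g : Λ →ᵇ ℝ) {x : Λ}
    {xs : ℕ → Λ} {p : ℕ → ℕ} (hp : ∀ n, 0 < p n) (hper : ∀ n, f^[p n] (xs n) = xs n)
    {a b : ℕ → ℕ} (hab : ∀ n, a n < b n) (hdvd : ∀ n, p n ∣ b n - a n) {ε : ℕ → ℝ}
    (hε : Tendsto ε atTop (𝓝 0))
    (hshadow : ∀ n, ∀ j, a n ≤ j → j ≤ b n → dist (f^[j] (xs n)) (f^[j] x) < ε n)
    (hratio : Tendsto (fun n => (a n : ℝ) / ((b n : ℝ) - (a n : ℝ))) atTop (𝓝 0)) :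
    Tendsto (fun n => ∫ z, g z ∂(empP f x (b n - 1) : Measure Λ)
      - ∫ z, g z ∂(perP f (xs n) (p n) (hp n) : Measure Λ)) atTop (𝓝 0) := by
  rw [Metric.tendsto_atTop]
  intro r hr
  obtain ⟨η, hη, hgη⟩ := Metric.uniformContinuous_iff.mp
    (CompactSpace.uniformContinuous_of_continuous g.continuous) (r / 2) (half_pos hr)
  have hratio' : Tendsto (fun n => 2 * ‖g‖ * ((a n : ℝ) / (b n - a n))) atTop (𝓝 0) := by
    simpa using hratio.const_mul (2 * ‖g‖)
  obtain ⟨N, hN⟩ := eventually_atTop.1 <|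
    (hε.eventually (gt_mem_nhds hη)).and (hratio'.eventually (gt_mem_nhds (half_pos hr)))
  refine ⟨N, fun n hn => ?_⟩
  obtain ⟨hεn, hrn⟩ := hN n hn
  have hclose := abs_average_sub_average_Ico_le (u := fun j => g (f^[j] x))
    (v := fun j => g (f^[j] (xs n))) (hab n) (C := ‖g‖) (η := r / 2)
    (fun j => by simpa only [Real.norm_eq_abs] using g.norm_coe_le_norm _)
    (fun j hj => (hgη (((dist_comm _ _).trans_lt (hshadow n j (Finset.mem_Ico.1 hj).1
      (Finset.mem_Ico.1 hj).2.le)).trans hεn)).le)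
  rw [Real.dist_eq, sub_zero, integral_empP,
    Nat.sub_add_cancel ((Nat.zero_le _).trans_lt (hab n)),
    integral_perP_eq_average_Ico g (hp n) (hper n) (hab n) (hdvd n)]
  linarith

end Dynamics

theorem invariant_measures_subset_accPts_general
    [MetricSpace Λ] [CompactSpace Λ] [MeasurableSpace Λ] [BorelSpace Λ]
    (f : Λ → Λ) (hf : Continuous f) (δ : ℝ)
    (x : Λ) (xs : ℕ → Λ) (p : ℕ → ℕ) (hp : ∀ n, 0 < p n)
    (hper : ∀ n, f^[p n] (xs n) = xs n)
    (hdense : invProb f ⊆ closure (Set.range fun n => perP f (xs n) (p n) (hp n)))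
    (a b : ℕ → ℕ) (hab : ∀ n, a n < b n) (hb : StrictMono b)
    (hdvd : ∀ n, p n ∣ (b n - a n))
    (hshadow : ∀ n, ∀ j, a n ≤ j → j ≤ b n →
      dist (f^[j] (xs n)) (f^[j] x) < (2 : ℝ) ^ (1 - (n : ℤ)) * δ)
    (hratio : Tendsto (fun n => (a n : ℝ) / ((b n : ℝ) - (a n : ℝ))) atTop (nhds 0)) :
    invProb f ⊆ accPts f x := by
  intro μ hμ
  obtain ⟨ψ, hψ, hPψ⟩ := (mapClusterPt_of_invProb_subset_closure_range hf.measurable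
    (fun n => perP_mem_invProb hf.measurable (hp n) (hper n)) hdense hμ).tendsto_subseq
  have hshadow_lim : Tendsto (fun n : ℕ => (2 : ℝ) ^ (1 - (n : ℤ)) * δ) atTop (𝓝 0) := by
    have h := (tendsto_pow_atTop_nhds_zero_of_lt_one (by norm_num : (0 : ℝ) ≤ 2⁻¹)
      (by norm_num)).const_mul (2 * δ)
    rw [mul_zero] at h
    refine h.congr fun n => ?_
    rw [zpow_sub₀ two_ne_zero, zpow_one, zpow_natCast, inv_pow]
    ring
  have hemp : Tendsto (fun k => empP f x (b (ψ k) - 1)) atTop (𝓝 μ) :=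
    ProbabilityMeasure.tendsto_of_forall_integral_sub_tendsto_zero hPψ fun g =>
      (tendsto_integral_empP_sub_integral_perP g hp hper hab hdvd hshadow_lim hshadow
        hratio).comp hψ.tendsto_atTop
  have htimes : Tendsto (fun k => b (ψ k) - 1) atTop atTop :=
    (tendsto_sub_atTop_nat 1).comp (hb.comp hψ).tendsto_atTop
  exact MapClusterPt.of_comp htimes hemp.mapClusterPt

/-- if the periodic measures of the periodic points `x_n` are dense in
`M_f(Λ)` and `x` shadows each `x_n` on `[a_n, b_n]` with error `2^{-n+1} δ`, where
`a_n/(b_n - a_n) → 0` and the period of `x_n` divides `b_n - a_n`, then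
`M_f(Λ) ⊆ V_f(x)`. -/
theorem invariant_measures_subset_accPts
    [MetricSpace Λ] [CompactSpace Λ] [MeasurableSpace Λ] [BorelSpace Λ]
    (f : Λ → Λ) (hf : Continuous f) (δ : ℝ) (hδ : 0 < δ)
    (x : Λ) (xs : ℕ → Λ) (p : ℕ → ℕ) (hp : ∀ n, 0 < p n)
    (hper : ∀ n, f^[p n] (xs n) = xs n)
    (hdense : invProb f ⊆ closure (Set.range fun n => perP f (xs n) (p n) (hp n)))
    (a b : ℕ → ℕ) (hab : ∀ n, a n < b n) (hb : StrictMono b)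
    (hdvd : ∀ n, p n ∣ (b n - a n))
    (hshadow : ∀ n, ∀ j, a n ≤ j → j ≤ b n →
      dist (f^[j] (xs n)) (f^[j] x) < (2 : ℝ) ^ (1 - (n : ℤ)) * δ)
    (hratio : Tendsto (fun n => (a n : ℝ) / ((b n : ℝ) - (a n : ℝ))) atTop (nhds 0)) :
    invProb f ⊆ accPts f x :=
  invariant_measures_subset_accPts_general f hf δ x xs p hp hper hdense a b hab hb hdvd hshadow
    hratio
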